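/- Let u, v ∈ ℂ. There exists γ ∈ ℂ such that 𝔭_u + γ·𝔮_v ∈ D(T) if and only if B(u,v) = 0, and in the affirmative case γ is uniquely determined and equals −D(u,v). In particular 𝔭_u + γ·𝔮_u ∉ D(T) for all u, γ ∈ ℂ. -/

import Mathlib

open Filter Topology MeasureTheory

noncomputable section

/-- Action of the Jacobi matrix `J` on a complex sequence:
`(Jc)ₙ = aₙ₋₁cₙ₋₁ + bₙcₙ + aₙcₙ₊₁` with `a₋₁ := 0`. -/
def jacobiMul (a b : ℕ → ℝ) (c : ℕ → ℂ) : ℕ → ℂ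
  | 0 => (b 0 : ℂ) * c 0 + (a 0 : ℂ) * c 1
  | n + 1 => (a n : ℂ) * c n + (b (n + 1) : ℂ) * c (n + 1) + (a (n + 1) : ℂ) * c (n + 2)

/-- `jacobiGraph a b f g` means: `f` belongs to the domain `D(T)` of the closure `T` of the
Jacobi matrix acting on the finitely supported sequences, and `T f = g`; i.e. there are
finitely supported sequences `u k → f` in `ℓ²` such that `J (u k) → g` in `ℓ²`. -/
def jacobiGraph (a b : ℕ → ℝ) (f g : ℕ → ℂ) : Prop :=
  ∃ u : ℕ → ℕ → ℂ,
    (∀ k, (Function.support (u k)).Finite) ∧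
    (∀ k, Summable fun n => ‖u k n - f n‖ ^ 2) ∧
    Tendsto (fun k => ∑' n, ‖u k n - f n‖ ^ 2) atTop (𝓝 0) ∧
    (∀ k, Summable fun n => ‖jacobiMul a b (u k) n - g n‖ ^ 2) ∧
    Tendsto (fun k => ∑' n, ‖jacobiMul a b (u k) n - g n‖ ^ 2) atTop (𝓝 0)

/-- Membership in the domain `D(T)` of the Jacobi operator. -/
def inDomT (a b : ℕ → ℝ) (f : ℕ → ℂ) : Prop := ∃ g, jacobiGraph a b f g

/-- The `ℓ²` norm of a complex sequence. -/
def l2norm (f : ℕ → ℂ) : ℝ := Real.sqrt (∑' n, ‖f n‖ ^ 2)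

/-- The data of an indeterminate Hamburger moment problem: Jacobi parameters `a`, `b`,
the orthonormal polynomials `p` and second-kind polynomials `q` (as entire functions),
determined by the three-term recurrence, together with the indeterminacy condition
`∑ₙ (|pₙ(z)|² + |qₙ(z)|²) < ∞` for all `z`. -/
structure JacobiSetup where
  a : ℕ → ℝ
  b : ℕ → ℝ
  ha : ∀ n, 0 < a n
  p : ℕ → ℂ → ℂ
  q : ℕ → ℂ → ℂ
  hp0 : ∀ z, p 0 z = 1
  hp1 : ∀ z, p 1 z = (z - (b 0 : ℂ)) / (a 0 : ℂ)
  hq0 : ∀ z, q 0 z = 0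
  hq1 : ∀ z, q 1 z = 1 / (a 0 : ℂ)
  hrecp : ∀ n z, z * p (n + 1) z =
    (a (n + 1) : ℂ) * p (n + 2) z + (b (n + 1) : ℂ) * p (n + 1) z + (a n : ℂ) * p n z
  hrecq : ∀ n z, z * q (n + 1) z =
    (a (n + 1) : ℂ) * q (n + 2) z + (b (n + 1) : ℂ) * q (n + 1) z + (a n : ℂ) * q n z
  indet : ∀ z : ℂ, Summable fun n => ‖p n z‖ ^ 2 + ‖q n z‖ ^ 2

/-- The Nevanlinna function `A(u,v)`. -/
def nevA (S : JacobiSetup) (u v : ℂ) : ℂ := (u - v) * ∑' k, S.q k u * S.q k v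
/-- The Nevanlinna function `B(u,v)`. -/
def nevB (S : JacobiSetup) (u v : ℂ) : ℂ := -1 + (u - v) * ∑' k, S.p k u * S.q k v
/-- The Nevanlinna function `C(u,v)`. -/
def nevC (S : JacobiSetup) (u v : ℂ) : ℂ := 1 + (u - v) * ∑' k, S.q k u * S.p k v
/-- The Nevanlinna function `D(u,v)`. -/
def nevD (S : JacobiSetup) (u v : ℂ) : ℂ := (u - v) * ∑' k, S.p k u * S.p k v

/-!
For `f` with `f, Jf ∈ ℓ²`, Green's formula
`∑_{n ≤ m} ((Jf)ₙ hₙ − fₙ (Jh)ₙ) = W_m(f, h) := aₘ (fₘ₊₁ hₘ − fₘ hₘ₊₁)`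
shows that `f ∈ D(T)` iff `W_m(f, 𝔮_v) → 0` and `W_m(f, 𝔭_v) → 0`. Necessity: the bilinear
identity `⟨Jc, h⟩ = ⟨c, Jh⟩` for finitely supported `c` passes to the limit. Sufficiency: since
`W_m(𝔮_v, 𝔭_v) = 1`, the sequence `f − W_k(f, 𝔭_v) 𝔮_v + W_k(f, 𝔮_v) 𝔭_v` vanishes at `k` and
`k + 1`, so its truncation to `[0, k]` is a finitely supported approximant of `f` whose image
under `J` is the truncation of `Jf − W_k(f, 𝔭_v) J𝔮_v + W_k(f, 𝔮_v) J𝔭_v`; both converge in `ℓ²`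
because the Wronskians tend to `0`.

For `f = 𝔭_u + γ 𝔮_v` the Christoffel–Darboux formula gives `W_m(f, 𝔮_v) → B(u, v)` and
`W_m(f, 𝔭_v) → D(u, v) + γ`, while `B(w, w) = −1`.
-/

theorem tendsto_nhds_zero_iff_of_tendsto {α X : Type*} [TopologicalSpace X] [T2Space X] [Zero X]
    {l : Filter α} [l.NeBot] {x : α → X} {L : X} (hx : Tendsto x l (𝓝 L)) :
    Tendsto x l (𝓝 0) ↔ L = 0 :=
  ⟨fun h => tendsto_nhds_unique hx h, fun h => h ▸ hx⟩
theorem memℓp_two_iff {α : Type*} {E : α → Type*} [∀ i, NormedAddCommGroup (E i)]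
    {f : ∀ i, E i} : Memℓp f 2 ↔ Summable fun i => ‖f i‖ ^ 2 := by
  rw [memℓp_gen_iff (by norm_num)]
  norm_num

theorem memℓp_of_support_finite {α E : Type*} [NormedAddCommGroup E] {p : ENNReal} {f : α → E}
    (hf : (Function.support f).Finite) : Memℓp f p :=
  (memℓp_zero hf).of_exponent_ge zero_le

section CauchySchwarz

variable {α R : Type*} [NormedRing R] {x y : α → R}

theorem Memℓp.summable_norm_mul (hx : Memℓp x 2) (hy : Memℓp y 2) :
    Summable fun i => ‖x i‖ * ‖y i‖ :=
  lp.summable_mul (by norm_num [Real.HolderConjugate.two_two]) ⟨x, hx⟩ ⟨y, hy⟩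

theorem Memℓp.summable_mul [CompleteSpace R] (hx : Memℓp x 2) (hy : Memℓp y 2) :
    Summable fun i => x i * y i :=
  .of_norm_bounded (hx.summable_norm_mul hy) fun _ => norm_mul_le _ _

theorem Memℓp.norm_tsum_mul_le (hx : Memℓp x 2) (hy : Memℓp y 2) :
    ‖∑' i, x i * y i‖ ≤ √(∑' i, ‖x i‖ ^ 2) * √(∑' i, ‖y i‖ ^ 2) := by
  have hnorm (f : lp (fun _ : α => R) 2) : ‖f‖ = √(∑' i, ‖f i‖ ^ 2) := by
    rw [lp.norm_eq_tsum_rpow (by norm_num), Real.sqrt_eq_rpow]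
    norm_num
  calc ‖∑' i, x i * y i‖ ≤ ∑' i, ‖x i‖ * ‖y i‖ :=
        tsum_of_norm_bounded (hx.summable_norm_mul hy).hasSum fun _ => norm_mul_le _ _
    _ ≤ ‖(⟨x, hx⟩ : lp (fun _ : α => R) 2)‖ * ‖(⟨y, hy⟩ : lp (fun _ : α => R) 2)‖ :=
        lp.tsum_mul_le_mul_norm' (by norm_num [Real.HolderConjugate.two_two]) ⟨x, hx⟩ ⟨y, hy⟩
    _ = _ := by rw [hnorm, hnorm]

end CauchySchwarz

theorem Memℓp.tendsto_sum_range_succ_mul {R : Type*} [NormedRing R] [CompleteSpace R]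
    {x y : ℕ → R} (hx : Memℓp x 2) (hy : Memℓp y 2) :
    Tendsto (fun k => ∑ n ∈ Finset.range (k + 1), x n * y n) atTop (𝓝 (∑' n, x n * y n)) :=
  (hx.summable_mul hy).hasSum.tendsto_sum_nat.comp (tendsto_add_atTop_nat 1)

def L2Tendsto (x : ℕ → ℕ → ℂ) (f : ℕ → ℂ) : Prop :=
  (∀ k, Summable fun n => ‖x k n - f n‖ ^ 2) ∧
    Tendsto (fun k => ∑' n, ‖x k n - f n‖ ^ 2) atTop (𝓝 0)

namespace L2Tendsto

variable {x : ℕ → ℕ → ℂ} {f : ℕ → ℂ}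

theorem tendsto_apply (hx : L2Tendsto x f) (n : ℕ) :
    Tendsto (fun k => x k n) atTop (𝓝 (f n)) := by
  rw [tendsto_iff_norm_sub_tendsto_zero]
  refine squeeze_zero (fun _ => norm_nonneg _) (fun k => ?_) (by simpa using hx.2.sqrt)
  exact Real.le_sqrt_of_sq_le ((hx.1 k).le_tsum n fun _ _ => sq_nonneg _)

theorem tendsto_tsum_mul (hx : L2Tendsto x f) (hf : Memℓp f 2) {y : ℕ → ℂ} (hy : Memℓp y 2) :
    Tendsto (fun k => ∑' n, x k n * y n) atTop (𝓝 (∑' n, f n * y n)) := by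
  have hd (k : ℕ) : Memℓp (fun n => x k n - f n) 2 := memℓp_two_iff.2 (hx.1 k)
  have hsplit (k : ℕ) : ∑' n, x k n * y n = ∑' n, (x k n - f n) * y n + ∑' n, f n * y n := by
    rw [← ((hd k).summable_mul hy).tsum_add (hf.summable_mul hy)]
    simp [sub_mul]
  have hsmall : Tendsto (fun k => ∑' n, (x k n - f n) * y n) atTop (𝓝 0) :=
    squeeze_zero_norm (fun k => (hd k).norm_tsum_mul_le hy) (by simpa using hx.2.sqrt.mul_const _)
  simpa [hsplit] using hsmall.add_const (∑' n, f n * y n)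

end L2Tendsto

theorem support_truncate_finite (k : ℕ) (h : ℕ → ℂ) :
    (Function.support fun n => if n ≤ k then h n else 0).Finite :=
  (Set.finite_Iic k).subset fun _ hn => by_contra fun hnk => hn (if_neg hnk)

theorem l2Tendsto_truncate {y z w c d : ℕ → ℂ} (hy : Memℓp y 2) (hz : Memℓp z 2)
    (hw : Memℓp w 2) (hc : Tendsto c atTop (𝓝 0)) (hd : Tendsto d atTop (𝓝 0)) :
    L2Tendsto (fun k n => if n ≤ k then y n + c k * z n + d k * w n else 0) y := by
  set x : ℕ → ℕ → ℂ := fun k n => if n ≤ k then y n + c k * z n + d k * w n else 0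
  have hx (k : ℕ) : Memℓp (x k) 2 := memℓp_of_support_finite (support_truncate_finite k _)
  refine ⟨fun k => memℓp_two_iff.1 ((hx k).sub hy), ?_⟩
  have hbound : Summable fun n => 3 * (‖y n‖ ^ 2 + ‖z n‖ ^ 2 + ‖w n‖ ^ 2) :=
    (((memℓp_two_iff.1 hy).add (memℓp_two_iff.1 hz)).add (memℓp_two_iff.1 hw)).mul_left 3
  have hpoint (n : ℕ) : Tendsto (fun k => ‖x k n - y n‖ ^ 2) atTop (𝓝 0) := by
    have hlim : Tendsto (fun k => c k * z n + d k * w n) atTop (𝓝 0) := by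
      simpa using (hc.mul_const (z n)).add (hd.mul_const (w n))
    have hlim2 : Tendsto (fun k => ‖c k * z n + d k * w n‖ ^ 2) atTop (𝓝 0) := by
      simpa using hlim.norm.pow 2
    refine hlim2.congr' ?_
    filter_upwards [eventually_ge_atTop n] with k hk
    simp only [x, if_pos hk, add_assoc, add_sub_cancel_left]
  have hsmall : ∀ᶠ k in atTop, ∀ n,
      ‖‖x k n - y n‖ ^ 2‖ ≤ 3 * (‖y n‖ ^ 2 + ‖z n‖ ^ 2 + ‖w n‖ ^ 2) := by
    have hc1 : Tendsto (fun k => ‖c k‖) atTop (𝓝 0) := by simpa using hc.norm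
    have hd1 : Tendsto (fun k => ‖d k‖) atTop (𝓝 0) := by simpa using hd.norm
    filter_upwards [hc1.eventually_le_const one_pos, hd1.eventually_le_const one_pos]
      with k hck hdk n
    have hle : ‖x k n - y n‖ ≤ ‖y n‖ + (‖z n‖ + ‖w n‖) := by
      by_cases hn : n ≤ k
      · simp only [x, if_pos hn, add_assoc, add_sub_cancel_left]
        calc ‖c k * z n + d k * w n‖ ≤ ‖c k‖ * ‖z n‖ + ‖d k‖ * ‖w n‖ :=
              (norm_add_le _ _).trans (by rw [norm_mul, norm_mul])
          _ ≤ ‖y n‖ + (‖z n‖ + ‖w n‖) := by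
              nlinarith [norm_nonneg (y n), norm_nonneg (z n), norm_nonneg (w n)]
      · simp only [x, if_neg hn, zero_sub, norm_neg]
        linarith [norm_nonneg (z n), norm_nonneg (w n)]
    rw [Real.norm_of_nonneg (sq_nonneg _)]
    nlinarith [pow_le_pow_left₀ (norm_nonneg _) hle 2, sq_nonneg (‖y n‖ - ‖z n‖),
      sq_nonneg (‖z n‖ - ‖w n‖), sq_nonneg (‖y n‖ - ‖w n‖)]
  simpa using tendsto_tsum_of_dominated_convergence hbound hpoint hsmall

def wronskian (a : ℕ → ℝ) (f h : ℕ → ℂ) (m : ℕ) : ℂ := a m * (f (m + 1) * h m - f m * h (m + 1))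

section Jacobi

variable {a b : ℕ → ℝ}

theorem wronskian_add_mul (f g h : ℕ → ℂ) (c : ℂ) (m : ℕ) :
    wronskian a (fun n => f n + c * g n) h m = wronskian a f h m + c * wronskian a g h m := by
  simp only [wronskian]; ring

theorem wronskian_self (f : ℕ → ℂ) (m : ℕ) : wronskian a f f m = 0 := by
  simp only [wronskian]; ring

theorem jacobiMul_add_mul (f g : ℕ → ℂ) (c : ℂ) (n : ℕ) :
    jacobiMul a b (fun m => f m + c * g m) n = jacobiMul a b f n + c * jacobiMul a b g n := by
  cases n <;> simp only [jacobiMul] <;> ring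

theorem continuous_jacobiMul : Continuous (jacobiMul a b) :=
  continuous_pi fun n => by cases n <;> simp only [jacobiMul] <;> fun_prop

theorem jacobiMul_truncate {h : ℕ → ℂ} {k : ℕ} (hk : h k = 0) (hk1 : h (k + 1) = 0) (n : ℕ) :
    jacobiMul a b (fun m => if m ≤ k then h m else 0) n =
      if n ≤ k then jacobiMul a b h n else 0 := by
  set t : ℕ → ℂ := fun m => if m ≤ k then h m else 0
  have ht_le (m : ℕ) (hm : m ≤ k + 1) : t m = h m := by
    by_cases hmk : m ≤ k
    · simp [t, hmk]
    · obtain rfl : m = k + 1 := by omega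
      simp [t, hk1]
  have ht_ge (m : ℕ) (hm : k ≤ m) : t m = 0 := by
    by_cases hmk : m ≤ k
    · obtain rfl : m = k := by omega
      simp [t, hk]
    · simp [t, hmk]
  split_ifs with hn
  · rcases n with _ | n
    · simp only [jacobiMul, ht_le 0 (by omega), ht_le 1 (by omega)]
    · simp only [jacobiMul, ht_le n (by omega), ht_le (n + 1) (by omega), ht_le (n + 2) (by omega)]
  · rcases n with _ | n
    · omega
    · simp only [jacobiMul, ht_ge n (by omega), ht_ge (n + 1) (by omega), ht_ge (n + 2) (by omega)]
      ring

/-- Green's formula. -/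
theorem sum_range_jacobiMul_mul_sub (f h : ℕ → ℂ) (m : ℕ) :
    ∑ n ∈ Finset.range (m + 1), (jacobiMul a b f n * h n - f n * jacobiMul a b h n) =
      wronskian a f h m := by
  induction m with
  | zero => simp [jacobiMul, wronskian]; ring
  | succ m ih =>
    rw [Finset.sum_range_succ, ih]
    simp only [jacobiMul, wronskian]
    ring

theorem tsum_jacobiMul_mul_of_support_finite {c : ℕ → ℂ} (hc : (Function.support c).Finite)
    (h : ℕ → ℂ) : ∑' n, jacobiMul a b c n * h n = ∑' n, c n * jacobiMul a b h n := by
  obtain ⟨M, hM⟩ := hc.bddAbove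
  have hc0 (n : ℕ) (hn : M < n) : c n = 0 := Function.notMem_support.1 fun h => (hM h).not_gt hn
  have hJc0 (n : ℕ) (hn : M + 1 < n) : jacobiMul a b c n = 0 := by
    obtain ⟨n, rfl⟩ : ∃ t, n = t + 1 := ⟨n - 1, by omega⟩
    simp only [jacobiMul, hc0 n (by omega), hc0 (n + 1) (by omega), hc0 (n + 2) (by omega)]
    ring
  have hgreen := sum_range_jacobiMul_mul_sub (a := a) (b := b) c h (M + 1)
  rw [wronskian, hc0 (M + 1 + 1) (by omega), hc0 (M + 1) (by omega), Finset.sum_sub_distrib]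
    at hgreen
  rw [tsum_eq_sum (s := Finset.range (M + 2)) fun n hn => by
      rw [hJc0 n (by simp at hn; omega), zero_mul],
    tsum_eq_sum (s := Finset.range (M + 2)) fun n hn => by
      rw [hc0 n (by simp at hn; omega), zero_mul]]
  linear_combination hgreen

/-- Christoffel–Darboux formula. -/
theorem wronskian_eq_of_jacobiMul_eq {f h : ℕ → ℂ} {z w c d : ℂ}
    (hf : ∀ n, jacobiMul a b f n = z * f n + if n = 0 then c else 0)
    (hh : ∀ n, jacobiMul a b h n = w * h n + if n = 0 then d else 0) (m : ℕ) :
    wronskian a f h m = (z - w) * ∑ n ∈ Finset.range (m + 1), f n * h n + (c * h 0 - d * f 0) := by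
  rw [← sum_range_jacobiMul_mul_sub (b := b)]
  have hterm (n : ℕ) : jacobiMul a b f n * h n - f n * jacobiMul a b h n =
      (z - w) * (f n * h n) + if n = 0 then c * h 0 - d * f 0 else 0 := by
    rw [hf, hh]
    split_ifs with hn
    · subst hn; ring
    · ring
  simp only [hterm, Finset.sum_add_distrib, Finset.mul_sum, Finset.sum_ite_eq', Finset.mem_range,
    Nat.succ_pos, if_true]

end Jacobi

section Domain

variable {a b : ℕ → ℝ}

theorem jacobiGraph_iff {f g : ℕ → ℂ} :
    jacobiGraph a b f g ↔ ∃ u : ℕ → ℕ → ℂ, (∀ k, (Function.support (u k)).Finite) ∧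
      L2Tendsto u f ∧ L2Tendsto (fun k => jacobiMul a b (u k)) g := by
  simp only [jacobiGraph, L2Tendsto, and_assoc]

theorem jacobiGraph.eq_jacobiMul {f g : ℕ → ℂ} (hfg : jacobiGraph a b f g) :
    g = jacobiMul a b f := by
  obtain ⟨u, -, hu, hJu⟩ := jacobiGraph_iff.1 hfg
  exact tendsto_nhds_unique (tendsto_pi_nhds.2 hJu.tendsto_apply)
    ((continuous_jacobiMul.tendsto f).comp (tendsto_pi_nhds.2 hu.tendsto_apply))

theorem jacobiGraph.tendsto_wronskian {f g h : ℕ → ℂ} (hfg : jacobiGraph a b f g)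
    (hf : Memℓp f 2) (hJf : Memℓp (jacobiMul a b f) 2) (hh : Memℓp h 2)
    (hJh : Memℓp (jacobiMul a b h) 2) : Tendsto (wronskian a f h) atTop (𝓝 0) := by
  obtain rfl := hfg.eq_jacobiMul
  obtain ⟨u, hfin, hu, hJu⟩ := jacobiGraph_iff.1 hfg
  have hpair : ∑' n, jacobiMul a b f n * h n = ∑' n, f n * jacobiMul a b h n := by
    refine tendsto_nhds_unique ?_ (hu.tendsto_tsum_mul hf hJh)
    simpa only [tsum_jacobiMul_mul_of_support_finite (hfin _)] using hJu.tendsto_tsum_mul hJf hh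
  have hsum := (((hJf.summable_mul hh).sub (hf.summable_mul hJh)).hasSum.tendsto_sum_nat).comp
    (tendsto_add_atTop_nat 1)
  rw [(hJf.summable_mul hh).tsum_sub (hf.summable_mul hJh), hpair, sub_self] at hsum
  simpa only [Function.comp_def, sum_range_jacobiMul_mul_sub] using hsum

theorem inDomT_of_tendsto_wronskian {f φ ψ : ℕ → ℂ} (hf : Memℓp f 2)
    (hJf : Memℓp (jacobiMul a b f) 2) (hφ : Memℓp φ 2) (hJφ : Memℓp (jacobiMul a b φ) 2)
    (hψ : Memℓp ψ 2) (hJψ : Memℓp (jacobiMul a b ψ) 2) (hφψ : ∀ k, wronskian a φ ψ k = 1)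
    (hfφ : Tendsto (wronskian a f φ) atTop (𝓝 0)) (hfψ : Tendsto (wronskian a f ψ) atTop (𝓝 0)) :
    inDomT a b f := by
  set c : ℕ → ℂ := fun k => -wronskian a f ψ k
  set H : ℕ → ℕ → ℂ := fun k n => f n + c k * φ n + wronskian a f φ k * ψ n
  have hHk (k : ℕ) : H k k = 0 := by
    simp only [H, c, wronskian] at hφψ ⊢
    linear_combination (-f k) * hφψ k
  have hHk1 (k : ℕ) : H k (k + 1) = 0 := by
    simp only [H, c, wronskian] at hφψ ⊢
    linear_combination (-f (k + 1)) * hφψ k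
  have hc : Tendsto c atTop (𝓝 0) := by simpa using hfψ.neg
  have hJH (k n : ℕ) : jacobiMul a b (H k) n = jacobiMul a b f n + c k * jacobiMul a b φ n +
      wronskian a f φ k * jacobiMul a b ψ n := by
    simp only [H, jacobiMul_add_mul]
  refine ⟨jacobiMul a b f, jacobiGraph_iff.2 ⟨fun k n => if n ≤ k then H k n else 0,
    fun k => support_truncate_finite k _, l2Tendsto_truncate hf hφ hψ hc hfφ, ?_⟩⟩
  convert l2Tendsto_truncate hJf hJφ hJψ hc hfφ using 2 with k
  ext n
  rw [jacobiMul_truncate (hHk k) (hHk1 k), hJH]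

theorem inDomT_iff_tendsto_wronskian {f φ ψ : ℕ → ℂ} (hf : Memℓp f 2)
    (hJf : Memℓp (jacobiMul a b f) 2) (hφ : Memℓp φ 2) (hJφ : Memℓp (jacobiMul a b φ) 2)
    (hψ : Memℓp ψ 2) (hJψ : Memℓp (jacobiMul a b ψ) 2) (hφψ : ∀ k, wronskian a φ ψ k = 1) :
    inDomT a b f ↔
      Tendsto (wronskian a f φ) atTop (𝓝 0) ∧ Tendsto (wronskian a f ψ) atTop (𝓝 0) :=
  ⟨fun ⟨_, hfg⟩ => ⟨hfg.tendsto_wronskian hf hJf hφ hJφ, hfg.tendsto_wronskian hf hJf hψ hJψ⟩,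
    fun ⟨hfφ, hfψ⟩ => inDomT_of_tendsto_wronskian hf hJf hφ hJφ hψ hJψ hφψ hfφ hfψ⟩

end Domain

namespace JacobiSetup

variable (S : JacobiSetup)

theorem memℓp_p (z : ℂ) : Memℓp (fun n => S.p n z) 2 :=
  memℓp_two_iff.2 <| (S.indet z).of_nonneg_of_le (fun _ => sq_nonneg _)
    fun _ => le_add_of_nonneg_right (sq_nonneg _)

theorem memℓp_q (z : ℂ) : Memℓp (fun n => S.q n z) 2 :=
  memℓp_two_iff.2 <| (S.indet z).of_nonneg_of_le (fun _ => sq_nonneg _)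
    fun _ => le_add_of_nonneg_left (sq_nonneg _)

theorem jacobiMul_p (z : ℂ) (n : ℕ) : jacobiMul S.a S.b (fun m => S.p m z) n = z * S.p n z := by
  have ha0 : (S.a 0 : ℂ) ≠ 0 := Complex.ofReal_ne_zero.2 (S.ha 0).ne'
  rcases n with _ | n
  · simp only [jacobiMul, S.hp0, S.hp1]
    field_simp
    ring
  · simp only [jacobiMul, S.hrecp]
    ring

theorem jacobiMul_q (z : ℂ) (n : ℕ) :
    jacobiMul S.a S.b (fun m => S.q m z) n = z * S.q n z + if n = 0 then 1 else 0 := by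
  have ha0 : (S.a 0 : ℂ) ≠ 0 := Complex.ofReal_ne_zero.2 (S.ha 0).ne'
  rcases n with _ | n
  · simp [jacobiMul, S.hq0, S.hq1, ha0]
  · simp only [jacobiMul, S.hrecq, Nat.succ_ne_zero, if_false, add_zero]
    ring

theorem memℓp_jacobiMul_p (z : ℂ) : Memℓp (jacobiMul S.a S.b fun m => S.p m z) 2 := by
  simpa only [funext (S.jacobiMul_p z)] using (S.memℓp_p z).const_mul z

theorem memℓp_jacobiMul_q (z : ℂ) : Memℓp (jacobiMul S.a S.b fun m => S.q m z) 2 := by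
  have hδ : Memℓp (fun n : ℕ => if n = 0 then (1 : ℂ) else 0) 2 :=
    memℓp_of_support_finite <|
      (Set.finite_singleton 0).subset fun _ hn => by_contra fun h => hn (if_neg h)
  rw [funext (S.jacobiMul_q z)]
  exact ((S.memℓp_q z).const_mul z).add hδ

theorem wronskian_q_p (z : ℂ) (k : ℕ) :
    wronskian S.a (fun n => S.q n z) (fun n => S.p n z) k = 1 := by
  rw [wronskian_eq_of_jacobiMul_eq (w := z) (d := 0) (S.jacobiMul_q z)
    (fun n => by simp [S.jacobiMul_p]) k]
  simp [S.hp0, S.hq0]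

theorem wronskian_p_q (u v : ℂ) (k : ℕ) :
    wronskian S.a (fun n => S.p n u) (fun n => S.q n v) k =
      (u - v) * ∑ n ∈ Finset.range (k + 1), S.p n u * S.q n v - 1 := by
  rw [wronskian_eq_of_jacobiMul_eq (b := S.b) (z := u) (c := 0) (fun n => by simp [S.jacobiMul_p])
    (S.jacobiMul_q v) k]
  simp [S.hp0, S.hq0, sub_eq_add_neg]

theorem wronskian_p_p (u v : ℂ) (k : ℕ) :
    wronskian S.a (fun n => S.p n u) (fun n => S.p n v) k =
      (u - v) * ∑ n ∈ Finset.range (k + 1), S.p n u * S.p n v := by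
  rw [wronskian_eq_of_jacobiMul_eq (b := S.b) (z := u) (w := v) (c := 0) (d := 0)
    (fun n => by simp [S.jacobiMul_p]) (fun n => by simp [S.jacobiMul_p]) k]
  simp

theorem tendsto_wronskian_p_add_mul_q_q (u v γ : ℂ) :
    Tendsto (wronskian S.a (fun n => S.p n u + γ * S.q n v) fun n => S.q n v) atTop
      (𝓝 (nevB S u v)) := by
  rw [nevB, neg_add_eq_sub]
  refine ((((S.memℓp_p u).tendsto_sum_range_succ_mul (S.memℓp_q v)).const_mul (u - v)).sub_const
    1).congr fun k => ?_
  rw [wronskian_add_mul, wronskian_self, wronskian_p_q, mul_zero, add_zero]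

theorem tendsto_wronskian_p_add_mul_q_p (u v γ : ℂ) :
    Tendsto (wronskian S.a (fun n => S.p n u + γ * S.q n v) fun n => S.p n v) atTop
      (𝓝 (nevD S u v + γ)) := by
  refine ((((S.memℓp_p u).tendsto_sum_range_succ_mul (S.memℓp_p v)).const_mul (u - v)).add_const
    γ).congr fun k => ?_
  rw [wronskian_add_mul, wronskian_q_p, wronskian_p_p, mul_one]

theorem inDomT_p_add_mul_q_iff (u v γ : ℂ) :
    inDomT S.a S.b (fun n => S.p n u + γ * S.q n v) ↔ nevB S u v = 0 ∧ γ = -nevD S u v := by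
  have hf : Memℓp (fun n => S.p n u + γ * S.q n v) 2 :=
    (S.memℓp_p u).add ((S.memℓp_q v).const_mul γ)
  have hJf : Memℓp (jacobiMul S.a S.b fun n => S.p n u + γ * S.q n v) 2 := by
    rw [funext (jacobiMul_add_mul _ _ γ)]
    exact (S.memℓp_jacobiMul_p u).add ((S.memℓp_jacobiMul_q v).const_mul γ)
  rw [inDomT_iff_tendsto_wronskian hf hJf (S.memℓp_q v) (S.memℓp_jacobiMul_q v) (S.memℓp_p v)
    (S.memℓp_jacobiMul_p v) (S.wronskian_q_p v),
    tendsto_nhds_zero_iff_of_tendsto (S.tendsto_wronskian_p_add_mul_q_q u v γ),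
    tendsto_nhds_zero_iff_of_tendsto (S.tendsto_wronskian_p_add_mul_q_p u v γ),
    eq_neg_iff_add_eq_zero, add_comm γ]

end JacobiSetup

/-- There exists `γ` with `𝔭_u + γ 𝔮_v ∈ D(T)` iff `B(u,v) = 0`, and in the affirmative
case `γ` is unique and equals `−D(u,v)`.  In particular `𝔭_w + γ 𝔮_w ∉ D(T)` for all
`w, γ ∈ ℂ`. -/
theorem stmt3 (S : JacobiSetup) (u v : ℂ) :
    ((∃ γ : ℂ, inDomT S.a S.b fun n => S.p n u + γ * S.q n v) ↔ nevB S u v = 0) ∧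
    (∀ γ : ℂ, (inDomT S.a S.b fun n => S.p n u + γ * S.q n v) → γ = -nevD S u v) ∧
    ∀ w γ : ℂ, ¬ inDomT S.a S.b fun n => S.p n w + γ * S.q n w := by
  refine ⟨⟨fun ⟨γ, hγ⟩ => ((S.inDomT_p_add_mul_q_iff u v γ).1 hγ).1,
    fun hB => ⟨_, (S.inDomT_p_add_mul_q_iff u v _).2 ⟨hB, rfl⟩⟩⟩,
    fun γ hγ => ((S.inDomT_p_add_mul_q_iff u v γ).1 hγ).2, fun w γ hw => ?_⟩
  have hB := ((S.inDomT_p_add_mul_q_iff w w γ).1 hw).1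
  simp [nevB] at hB
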